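/- If the clique-variant cross-composition graph G'(S) has an induced matching with at least k = n + |𝒞| - n/3 + 1 edges, then it has an induced matching with the same number of edges that saturates the vertex q. -/

import Mathlib

open SimpleGraph

/-- `M` is a matching of `G`, viewed as a set of edges. -/
def MatchingEdges {V : Type*} (G : SimpleGraph V) (M : Set (Sym2 V)) : Prop :=
  M ⊆ G.edgeSet ∧ ∀ e ∈ M, ∀ f ∈ M, e ≠ f → ∀ v : V, v ∈ e → v ∉ f

/-- The set of `M`-saturated vertices. -/
def msat {V : Type*} (M : Set (Sym2 V)) : Set V := {v | ∃ e ∈ M, v ∈ e}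

/-- `M` is an induced matching of `G`. -/
def InducedMatchingEdges {V : Type*} (G : SimpleGraph V) (M : Set (Sym2 V)) : Prop :=
  MatchingEdges G M ∧
    ∀ u v : V, u ∈ msat M → v ∈ msat M → G.Adj u v → s(u, v) ∈ M

/-- The union `𝒞` of the families `C 1, ..., C t`. -/
def allSets (n t : ℕ) (C : Fin t → Finset (Finset (Fin n))) : Finset (Finset (Fin n)) :=
  Finset.univ.biUnion C

/-- Vertex type of the cross-composition graph: `Sum.inl a` is `v_a`;
`Sum.inr (Sum.inl (S, 0))` is the star center `w_S` and `Sum.inr (Sum.inl (S, 1))` is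
the leaf `w_S^*`; `Sum.inr (Sum.inr (Sum.inl ⟨S, x⟩))` is the interface vertex `w_{S,x}`
(for `x ∈ S`); `Sum.inr (Sum.inr (Sum.inr none))` is `q` and
`Sum.inr (Sum.inr (Sum.inr (some i)))` is `p_i`. -/
abbrev CCVert (n t : ℕ) (C : Fin t → Finset (Finset (Fin n))) : Type _ :=
  Fin n ⊕ (({S // S ∈ allSets n t C} × Fin 2) ⊕
    ((Σ S : {S // S ∈ allSets n t C}, {x : Fin n // x ∈ S.val}) ⊕ Option (Fin t)))

/-- The clique-variant cross-composition graph `G'(S)`: like `G(S)` but the vertices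
`q, p_1, ..., p_t` form a clique. -/
def CCGraph' (n t : ℕ) (C : Fin t → Finset (Finset (Fin n))) :
    SimpleGraph (CCVert n t C) :=
  SimpleGraph.fromRel (fun a b =>
    match a, b with
    -- v_a ~ w_{S,x} iff x = a
    | Sum.inl a, Sum.inr (Sum.inr (Sum.inl ⟨_, x⟩)) => (x : Fin n) = a
    -- w_S ~ w_S^*
    | Sum.inr (Sum.inl (S, _)), Sum.inr (Sum.inl (S', _)) => S = S'
    -- w_S ~ w_{S,x}
    | Sum.inr (Sum.inl (S, i)), Sum.inr (Sum.inr (Sum.inl ⟨S', _⟩)) => S = S' ∧ i = 0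
    -- {q, p_1, ..., p_t} is a clique
    | Sum.inr (Sum.inr (Sum.inr _)), Sum.inr (Sum.inr (Sum.inr _)) => True
    -- p_i ~ w_{S,x} iff S ∉ C i
    | Sum.inr (Sum.inr (Sum.inr (some i))), Sum.inr (Sum.inr (Sum.inl ⟨S, _⟩)) =>
        (S : Finset (Fin n)) ∉ C i
    | _, _ => False)

/-! If `q` is unsaturated in a large induced matching, some matching edge still meets the clique `{q, p_1, …, p_t}`. Otherwise
every matching edge contains a vertex `v_a` or a star centre `w_S`, and `w_S` is unmatched as soon as
some `v_a` is matched to `w_{S,a}`; with `U` unmatched centres this bounds the matching by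
`min(n, 3U) + |𝒞| - U ≤ n + |𝒞| - n/3`. As the clique vertices are pairwise adjacent and the matching
is induced, exactly one matching edge `e` meets the clique, at some `p_i`. Exchanging `e` for `q p_i`
keeps the matching induced, because all neighbours of `q` lie in the clique. -/

section Matching

variable {V : Type*} {G : SimpleGraph V} {M N : Set (Sym2 V)} {e f g : Sym2 V}

theorem MatchingEdges.eq_of_mem_of_mem (hM : MatchingEdges G M) (he : e ∈ M) (hf : f ∈ M)
    {v : V} (hve : v ∈ e) (hvf : v ∈ f) : e = f := by
  by_contra hef
  exact hM.2 e he f hf hef v hve hvf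

theorem MatchingEdges.ncard_le_card (hM : MatchingEdges G M) (T : Finset V)
    (hT : ∀ e ∈ M, ∃ v ∈ T, v ∈ e) : M.ncard ≤ T.card := by
  have hpick : ∀ e : Sym2 V, ∃ v : V, e ∈ M → v ∈ T ∧ v ∈ e := by
    intro e
    by_cases he : e ∈ M
    · obtain ⟨v, hvT, hve⟩ := hT e he
      exact ⟨v, fun _ => ⟨hvT, hve⟩⟩
    · induction e with
      | h a b => exact ⟨a, fun h => absurd h he⟩
  choose pick hpick using hpick
  rw [← Set.ncard_coe_finset]
  refine Set.ncard_le_ncard_of_injOn pick (fun e he => (hpick e he).1) ?_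
  intro e he f hf hef
  exact hM.eq_of_mem_of_mem he hf (hpick e he).2 (hef ▸ (hpick f hf).2)

theorem InducedMatchingEdges.eq_of_adj (hM : InducedMatchingEdges G M) (he : e ∈ M)
    (hf : f ∈ M) {u v : V} (hue : u ∈ e) (hvf : v ∈ f) (huv : G.Adj u v) : e = f := by
  have huvM := hM.2 u v ⟨e, he, hue⟩ ⟨f, hf, hvf⟩ huv
  exact (hM.1.eq_of_mem_of_mem he huvM hue (Sym2.mem_mk_left u v)).trans
    (hM.1.eq_of_mem_of_mem huvM hf (Sym2.mem_mk_right u v) hvf)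

theorem InducedMatchingEdges.mono (hM : InducedMatchingEdges G M) (hNM : N ⊆ M) :
    InducedMatchingEdges G N := by
  refine ⟨⟨hNM.trans hM.1.1, fun e he f hf => hM.1.2 e (hNM he) f (hNM hf)⟩, ?_⟩
  rintro u v ⟨e, he, hue⟩ ⟨f, hf, hvf⟩ huv
  obtain rfl := hM.eq_of_adj (hNM he) (hNM hf) hue hvf huv
  rwa [← (Sym2.mem_and_mem_iff huv.ne).mp ⟨hue, hvf⟩]

theorem mem_msat_insert {x : V} : x ∈ msat (insert g N) ↔ x ∈ g ∨ x ∈ msat N := by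
  simp [msat]

theorem InducedMatchingEdges.insert (hN : InducedMatchingEdges G N) {a b : V} (hab : G.Adj a b)
    (ha : ∀ x ∈ msat N, ¬ G.Adj a x) (hb : ∀ x ∈ msat N, ¬ G.Adj b x) :
    InducedMatchingEdges G (insert s(a, b) N) := by
  have hout : ∀ w ∈ s(a, b), w ∉ msat N := by
    rintro w hw hwN
    rcases Sym2.mem_iff.mp hw with rfl | rfl
    · exact hb w hwN hab.symm
    · exact ha w hwN hab
  refine ⟨⟨Set.insert_subset hab hN.1.1, ?_⟩, ?_⟩
  · rintro e (rfl | he) f (rfl | hf) hef v hve hvf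
    · exact hef rfl
    · exact hout v hve ⟨f, hf, hvf⟩
    · exact hout v hvf ⟨e, he, hve⟩
    · exact hN.1.2 e he f hf hef v hve hvf
  · intro u v hu hv huv
    rcases mem_msat_insert.mp hu with hug | huN <;> rcases mem_msat_insert.mp hv with hvg | hvN
    · exact Or.inl ((Sym2.mem_and_mem_iff huv.ne).mp ⟨hug, hvg⟩).symm
    · rcases Sym2.mem_iff.mp hug with rfl | rfl
      exacts [(ha v hvN huv).elim, (hb v hvN huv).elim]
    · rcases Sym2.mem_iff.mp hvg with rfl | rfl
      exacts [(ha u huN huv.symm).elim, (hb u huN huv.symm).elim]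
    · exact Set.mem_insert_of_mem _ (hN.2 u v huN hvN huv)

end Matching

namespace CCVert

variable {n t : ℕ} {C : Fin t → Finset (Finset (Fin n))}

abbrev cliqueVertex (o : Option (Fin t)) : CCVert n t C := Sum.inr (Sum.inr (Sum.inr o))

abbrev starCenter (S : {S // S ∈ allSets n t C}) : CCVert n t C := Sum.inr (Sum.inl (S, 0))

abbrev leaf (Sx : Σ S : {S // S ∈ allSets n t C}, {x : Fin n // x ∈ S.val}) :
    CCVert n t C :=
  Sum.inr (Sum.inr (Sum.inl Sx))

end CCVert

namespace CCGraph'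

open CCVert

variable {n t : ℕ} {C : Fin t → Finset (Finset (Fin n))}

theorem adj_cliqueVertex {o o' : Option (Fin t)} (h : o ≠ o') :
    (CCGraph' n t C).Adj (cliqueVertex o) (cliqueVertex o') := by
  rcases o with _ | i <;> rcases o' with _ | j <;> simp_all [CCGraph']

theorem exists_eq_cliqueVertex_of_adj {v : CCVert n t C}
    (h : (CCGraph' n t C).Adj (cliqueVertex none) v) :
    ∃ o, v = cliqueVertex o := by
  rcases v with a | ⟨S, i⟩ | Sx | o <;> simp_all [CCGraph']

theorem adj_starCenter_leaf (Sx : Σ S : {S // S ∈ allSets n t C}, {x : Fin n // x ∈ S.val}) :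
    (CCGraph' n t C).Adj (starCenter Sx.1) (leaf Sx) := by
  simp [CCGraph']

theorem exists_eq_leaf_of_adj {a : Fin n} {v : CCVert n t C}
    (h : (CCGraph' n t C).Adj (Sum.inl a) v) :
    ∃ Sx : Σ S : {S // S ∈ allSets n t C}, {x : Fin n // x ∈ S.val},
      Sx.2.val = a ∧ v = leaf Sx := by
  rcases v with a | ⟨S, i⟩ | Sx | o <;> simp_all [CCGraph']

theorem exists_inl_or_starCenter_mem {e : Sym2 (CCVert n t C)}
    (he : e ∈ (CCGraph' n t C).edgeSet) (hcl : ∀ o, cliqueVertex o ∉ e) :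
    ∃ w ∈ e, (∃ a, w = Sum.inl a) ∨ ∃ S, w = starCenter S := by
  induction e with
  | h u v =>
    rcases u with a | ⟨S, i⟩ | Sx | o <;> rcases v with a' | ⟨S', i'⟩ | Sx' | o' <;>
      simp_all [CCGraph']
    · obtain ⟨hii, rfl | rfl⟩ := he <;> fin_cases i <;> fin_cases i' <;> simp_all
    · exact (hcl o).1 rfl

theorem exists_starCenter_notMem_msat_of_inl_mem {M : Set (Sym2 (CCVert n t C))}
    (hM : InducedMatchingEdges (CCGraph' n t C) M) {e : Sym2 (CCVert n t C)} (he : e ∈ M)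
    {a : Fin n} (hae : Sum.inl a ∈ e) :
    ∃ S : {S // S ∈ allSets n t C}, a ∈ S.val ∧ starCenter S ∉ msat M := by
  have hadj : (CCGraph' n t C).Adj (Sum.inl a) (Sym2.Mem.other hae) := by
    rw [← mem_edgeSet, Sym2.other_spec]
    exact hM.1.1 he
  obtain ⟨Sx, rfl, hSx⟩ := exists_eq_leaf_of_adj hadj
  have hleaf : leaf Sx ∈ e := hSx ▸ Sym2.other_mem hae
  refine ⟨Sx.1, Sx.2.2, ?_⟩
  rintro ⟨f, hf, hcf⟩
  rw [hM.eq_of_adj hf he hcf hleaf (adj_starCenter_leaf Sx), ← Sym2.other_spec hae, hSx] at hcf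
  simp at hcf

theorem eq_of_cliqueVertex_mem {M : Set (Sym2 (CCVert n t C))}
    (hM : InducedMatchingEdges (CCGraph' n t C) M) {e f : Sym2 (CCVert n t C)} (he : e ∈ M)
    (hf : f ∈ M) {o o' : Option (Fin t)} (ho : cliqueVertex o ∈ e)
    (ho' : cliqueVertex o' ∈ f) : e = f := by
  by_cases h : o = o'
  · subst h
    exact hM.1.eq_of_mem_of_mem he hf ho ho'
  · exact hM.eq_of_adj he hf ho ho' (adj_cliqueVertex h)

theorem ncard_le_of_forall_cliqueVertex_notMem (h3 : ∀ S ∈ allSets n t C, S.card ≤ 3)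
    {M : Set (Sym2 (CCVert n t C))} (hM : InducedMatchingEdges (CCGraph' n t C) M)
    (hcl : ∀ e ∈ M, ∀ o, cliqueVertex o ∉ e) :
    M.ncard ≤ n + (allSets n t C).card - n / 3 := by
  classical
  set A := Finset.univ.filter fun a : Fin n => Sum.inl a ∈ msat M
  set B := Finset.univ.filter fun S : {S // S ∈ allSets n t C} => starCenter S ∈ msat M
  have hM_le : M.ncard ≤ A.card + B.card := by
    refine (hM.1.ncard_le_card (A.image Sum.inl ∪ B.image starCenter) ?_).trans
      ((Finset.card_union_le _ _).trans (add_le_add Finset.card_image_le Finset.card_image_le))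
    intro e he
    obtain ⟨w, hwe, ⟨a, rfl⟩ | ⟨S, rfl⟩⟩ :=
      exists_inl_or_starCenter_mem (hM.1.1 he) (hcl e he)
    · have ha : a ∈ A := by simpa [A] using ⟨e, he, hwe⟩
      exact ⟨_, Finset.mem_union_left _ (Finset.mem_image_of_mem _ ha), hwe⟩
    · have hS : S ∈ B := by simpa [B] using ⟨e, he, hwe⟩
      exact ⟨_, Finset.mem_union_right _ (Finset.mem_image_of_mem _ hS), hwe⟩
  have hA_le_n : A.card ≤ n := by simpa using Finset.card_le_univ A
  have hA_le : A.card ≤ (Finset.univ \ B).card * 3 := by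
    refine (Finset.card_le_card ?_).trans
      (Finset.card_biUnion_le_card_mul _ (fun S => S.val) 3 fun S _ => h3 S S.2)
    intro a ha
    obtain ⟨e, he, hae⟩ := (Finset.mem_filter.mp ha).2
    obtain ⟨S, haS, hS⟩ := exists_starCenter_notMem_msat_of_inl_mem hM he hae
    exact Finset.mem_biUnion.mpr ⟨S, by simpa [B] using hS, haS⟩
  have hB : (Finset.univ \ B).card + B.card = (allSets n t C).card := by
    rw [Finset.card_sdiff_add_card_eq_card (Finset.subset_univ B), Finset.card_univ,
      Fintype.card_coe]
  omega

end CCGraph'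

open CCVert CCGraph'

theorem clique_variant_saturating_q_general (n t : ℕ)
    (C : Fin t → Finset (Finset (Fin n)))
    (h3 : ∀ i, ∀ s ∈ C i, s.card = 3) :
    ∀ M : Set (Sym2 (CCVert n t C)), InducedMatchingEdges (CCGraph' n t C) M →
      n + (allSets n t C).card - n / 3 + 1 ≤ M.ncard →
      ∃ M' : Set (Sym2 (CCVert n t C)), InducedMatchingEdges (CCGraph' n t C) M' ∧
        M'.ncard = M.ncard ∧
        (Sum.inr (Sum.inr (Sum.inr none)) : CCVert n t C) ∈ msat M' := by
  intro M hM hk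
  by_cases hq : (cliqueVertex none : CCVert n t C) ∈ msat M
  · exact ⟨M, hM, rfl, hq⟩
  have h3' : ∀ S ∈ allSets n t C, S.card ≤ 3 := fun S hS => by
    obtain ⟨i, -, hi⟩ := Finset.mem_biUnion.mp hS
    exact (h3 i S hi).le
  obtain ⟨e, he, o, hoe⟩ : ∃ e ∈ M, ∃ o, cliqueVertex o ∈ e := by
    by_contra! hcl
    have := ncard_le_of_forall_cliqueVertex_notMem h3' hM hcl
    omega
  have ho : o ≠ none := by
    rintro rfl
    exact hq ⟨e, he, hoe⟩
  refine ⟨insert s(cliqueVertex none, cliqueVertex o) (M \ {e}),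
    (hM.mono Set.sdiff_subset).insert (adj_cliqueVertex ho.symm) ?_ ?_,
    Set.ncard_exchange (fun h => hq ⟨_, h, Sym2.mem_mk_left _ _⟩) he,
    _, Set.mem_insert _ _, Sym2.mem_mk_left _ _⟩
  · rintro x ⟨f, ⟨hf, hfe⟩, hxf⟩ hqx
    obtain ⟨o', rfl⟩ := exists_eq_cliqueVertex_of_adj hqx
    exact hfe (eq_of_cliqueVertex_mem hM hf he hxf hoe)
  · rintro x ⟨f, ⟨hf, hfe⟩, hxf⟩ hox
    exact hfe (hM.eq_of_adj hf he hxf hoe hox.symm)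

/-- If the clique-variant cross-composition graph has an induced matching with at least
`k = n + |𝒞| - n/3 + 1` edges, then it has an induced matching with the same number of
edges that saturates the vertex `q`. -/
theorem clique_variant_saturating_q (n t m : ℕ) (hn3 : 3 ∣ n) (hn : 0 < n)
    (C : Fin t → Finset (Finset (Fin n)))
    (hm : ∀ i, (C i).card = m)
    (h3 : ∀ i, ∀ s ∈ C i, s.card = 3)
    (hne : ∀ i j : Fin t, i ≠ j → C i ≠ C j) :
    ∀ M : Set (Sym2 (CCVert n t C)), InducedMatchingEdges (CCGraph' n t C) M →
      n + (allSets n t C).card - n / 3 + 1 ≤ M.ncard →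
      ∃ M' : Set (Sym2 (CCVert n t C)), InducedMatchingEdges (CCGraph' n t C) M' ∧
        M'.ncard = M.ncard ∧
        (Sum.inr (Sum.inr (Sum.inr none)) : CCVert n t C) ∈ msat M' :=
  clique_variant_saturating_q_general n t C h3
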